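/- If M₁, M₂ are sequence-based invariant subspaces of H²(D^n) and h is a unimodular function on T^n with M₂ = h·M₁, then h is independent of the variable z_n (h is both z_n-analytic and conjugate z_n-analytic, hence constant in z_n). -/

import Mathlib

/-!
Common setup: we model the Hardy space `H²(𝔻ⁿ)` via boundary values on the
`n`-torus `Tⁿ = (ℝ/ℤ)ⁿ`: `H²` is the subspace of `L²(Tⁿ)` of functions whose
Fourier coefficients with some negative index vanish.  `H^∞` functions are
(a.e. classes of) essentially bounded measurable functions with analytic
(nonnegative) Fourier spectrum, identified with their boundary functions `f*`.
Multiplication operators are expressed via a.e. pointwise products.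
-/

open MeasureTheory Complex
open scoped ComplexConjugate

noncomputable section

/-- The `n`-torus. -/
abbrev Torus (n : ℕ) := Fin n → AddCircle (1 : ℝ)

/-- `L²(Tⁿ)`. -/
abbrev Lp2 (n : ℕ) := Lp ℂ 2 (volume : Measure (Torus n))

/-- The monomial `z^α` (as a function on the torus). -/
def charFunT {n : ℕ} (α : Fin n → ℤ) : Torus n → ℂ := fun x => ∏ i, fourier (α i) (x i)

lemma charFun_continuous {n : ℕ} (α : Fin n → ℤ) : Continuous (charFunT α) :=
  continuous_finsetProd _ fun i _ => (fourier (α i)).continuous.comp (continuous_apply i)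

lemma charFun_norm {n : ℕ} (α : Fin n → ℤ) (x : Torus n) : ‖charFunT α x‖ = 1 := by
  rw [charFunT, norm_prod]
  simp [Circle.norm_coe]

lemma charFun_memℒp {n : ℕ} (α : Fin n → ℤ) :
    MemLp (charFunT α) 2 (volume : Measure (Torus n)) :=
  MemLp.of_bound (charFun_continuous α).aestronglyMeasurable 1
    (Filter.Eventually.of_forall fun x => (charFun_norm α x).le)

/-- The monomial `z^α` as an element of `L²(Tⁿ)`. -/
def charLp {n : ℕ} (α : Fin n → ℤ) : Lp2 n := (charFun_memℒp α).toLp _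

/-- The `α`-th Fourier coefficient of `f ∈ L²(Tⁿ)`. -/
def coeff {n : ℕ} (f : Lp2 n) (α : Fin n → ℤ) : ℂ := inner (𝕜 := ℂ) (charLp α) f

/-- The Hardy space `H²(𝔻ⁿ)` (boundary model): elements of `L²(Tⁿ)` whose Fourier
coefficients vanish off `ℕⁿ`. -/
def H2 (n : ℕ) : Submodule ℂ (Lp2 n) where
  carrier := {f | ∀ α : Fin n → ℤ, (∃ i, α i < 0) → coeff f α = 0}
  add_mem' := fun {f} {g} hf hg α hα => by
    have h1 := hf α hα; have h2 := hg α hα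
    simp only [coeff] at h1 h2 ⊢
    rw [inner_add_right, h1, h2, add_zero]
  zero_mem' := fun α _ => by simp [coeff]
  smul_mem' := fun c {f} hf α hα => by
    have h1 := hf α hα
    simp only [coeff] at h1 ⊢
    rw [inner_smul_right, h1, mul_zero]

/-- `H²(𝔻ⁿ)` as a subset of `L²(Tⁿ)`. -/
def H2set (n : ℕ) : Set (Lp2 n) := (H2 n : Set (Lp2 n))

/-- `φ` is (the boundary function of) an `H^∞(𝔻ⁿ)` function. -/
structure IsHinf {n : ℕ} (φ : Torus n → ℂ) : Prop where
  memLinf : MemLp φ ⊤ (volume : Measure (Torus n))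
  analytic : ∀ α : Fin n → ℤ, (∃ i, α i < 0) →
    ∫ x, conj (charFunT α x) * φ x ∂(volume : Measure (Torus n)) = 0

/-- Generalized inner: `φ ∈ H^∞` with `1/φ* ∈ L^∞`, i.e. `|φ*|` essentially bounded below. -/
def IsGenInner {n : ℕ} (φ : Torus n → ℂ) : Prop :=
  IsHinf φ ∧ ∃ c : ℝ, 0 < c ∧ ∀ᵐ x ∂(volume : Measure (Torus n)), c ≤ ‖φ x‖

/-- Inner: `φ ∈ H^∞` with `|φ*| = 1` a.e. -/
def IsInner {n : ℕ} (φ : Torus n → ℂ) : Prop :=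
  IsHinf φ ∧ ∀ᵐ x ∂(volume : Measure (Torus n)), ‖φ x‖ = 1

/-- The image `φ·M` of a set `M ⊆ L²` under multiplication by a function `φ`. -/
def mulSet {n : ℕ} (φ : Torus n → ℂ) (M : Set (Lp2 n)) : Set (Lp2 n) :=
  {g | ∃ f ∈ M, (g : Torus n → ℂ) =ᵐ[(volume : Measure (Torus n))]
      fun x => φ x * (f : Torus n → ℂ) x}

/-- The coordinate function `z_i` on the torus. -/
def zCoord {n : ℕ} (i : Fin n) : Torus n → ℂ := charFunT (Pi.single i 1)

/-- Set-sum `A + B`. -/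
def sumSet {n : ℕ} (A B : Set (Lp2 n)) : Set (Lp2 n) := {h | ∃ a ∈ A, ∃ b ∈ B, h = a + b}

/-- Orthogonal difference `A ⊖ B`: elements of `A` orthogonal to `B`. -/
def osub {n : ℕ} (A B : Set (Lp2 n)) : Set (Lp2 n) :=
  {x ∈ A | ∀ y ∈ B, (inner (𝕜 := ℂ) y x : ℂ) = 0}

/-- `M` is a closed subspace of `L²(Tⁿ)` invariant under multiplication by every
coordinate `z₁, …, zₙ`. -/
structure IsInvariantSubspace {n : ℕ} (M : Set (Lp2 n)) : Prop where
  zero_mem : (0 : Lp2 n) ∈ M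
  add_mem : ∀ f g : Lp2 n, f ∈ M → g ∈ M → f + g ∈ M
  smul_mem : ∀ (c : ℂ) (f : Lp2 n), f ∈ M → c • f ∈ M
  closed : IsClosed M
  shift_mem : ∀ i : Fin n, mulSet (zCoord i) M ⊆ M

/-- Lift of a function of `z₁,…,zₙ` to the `(n+1)`-torus (ignoring the last variable). -/
def liftLast {n : ℕ} (φ : Torus n → ℂ) : Torus (n+1) → ℂ := fun x => φ (Fin.init x)

/-- Lift of a function of `z₂,…,z_{n+1}` to the `(n+1)`-torus (ignoring the first variable). -/
def liftTail {n : ℕ} (φ : Torus n → ℂ) : Torus (n+1) → ℂ := fun x => φ (Fin.tail x)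

/-- Lift of a one-variable function to the `(n+1)`-torus via the first variable. -/
def liftFst {n : ℕ} (φ : Torus 1 → ℂ) : Torus (n+1) → ℂ := fun x => φ (fun _ => x 0)

/-- `H²(𝔻ⁿ)` embedded in `L²(T^{n+1})` as the functions independent of the last variable. -/
def H2resLast (n : ℕ) : Set (Lp2 (n+1)) :=
  {F | ∀ α : Fin (n+1) → ℤ, ((∃ i, α i < 0) ∨ α (Fin.last n) ≠ 0) → coeff F α = 0}

/-- `H²(𝔻ⁿ)` (variables `z₂,…,z_{n+1}`) embedded in `L²(T^{n+1})`:
functions independent of the first variable. -/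
def H2resFst (n : ℕ) : Set (Lp2 (n+1)) :=
  {F | ∀ α : Fin (n+1) → ℤ, ((∃ i, α i < 0) ∨ α 0 ≠ 0) → coeff F α = 0}

/-- `H²(𝔻)` in the first variable only, inside `L²(T^{n+1})`. -/
def H2onlyFst (n : ℕ) : Set (Lp2 (n+1)) :=
  {F | ∀ α : Fin (n+1) → ℤ, ((∃ i, α i < 0) ∨ (∃ i, i ≠ 0 ∧ α i ≠ 0)) → coeff F α = 0}

/-- The `l`-th piece `z_n^l · f_l · H²(𝔻^{n-1})` of a sequence-based subspace
(distinguished variable: the last one). -/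
def seqPiece {n : ℕ} (f : ℕ → Torus n → ℂ) (l : ℕ) : Set (Lp2 (n+1)) :=
  mulSet (fun x => charFunT (Pi.single (Fin.last n) (l : ℤ)) x * liftLast (f l) x) (H2resLast n)

/-- The sequence-based subspace `⊕_{l≥0} f_l H²(𝔻^{n-1}) z_n^l`, as the closed span of its
(pairwise orthogonal, closed) pieces. -/
def seqM {n : ℕ} (f : ℕ → Torus n → ℂ) : Submodule ℂ (Lp2 (n+1)) :=
  (Submodule.span ℂ (⋃ l : ℕ, seqPiece f l)).topologicalClosure

/-- Conditions (I) and (II): each `f_l` is generalized inner, and each quotient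
`f_l / f_{l+1}` is a generalized inner function (expressed via `f_{l+1} · q = f_l`). -/
def SeqCond {n : ℕ} (f : ℕ → Torus n → ℂ) : Prop :=
  (∀ l, IsGenInner (f l)) ∧
  ∀ l, ∃ q : Torus n → ℂ, IsGenInner q ∧
    (fun x => f (l+1) x * q x) =ᵐ[(volume : Measure (Torus n))] f l

/-- The vector-valued Hardy space `H²(K)` with `K = H²(𝔻ⁿ)`, realized as `ℓ²` of the
Taylor coefficients. -/
abbrev lpH (n : ℕ) := lp (fun _ : ℕ => H2 n) 2

/-- `G` is the image of `F` under multiplication by the independent variable (the shift). -/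
def ShiftRel {K : Type*} [NormedAddCommGroup K] (F G : lp (fun _ : ℕ => K) 2) : Prop :=
  (G : ∀ _ : ℕ, K) 0 = 0 ∧ ∀ m, (G : ∀ _ : ℕ, K) (m + 1) = (F : ∀ _ : ℕ, K) m

/-- The `l`-th Taylor coefficient of a (boundary) function on the circle. -/
def hinfCoeff (φ : Torus 1 → ℂ) (l : ℤ) : ℂ :=
  ∫ x, conj (charFunT (fun _ : Fin 1 => l) x) * φ x ∂(volume : Measure (Torus 1))

/-- Unitary equivalence of (invariant) subspaces `M₁, M₂ ⊆ L²(Tⁿ)`: a surjective linear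
isometry `U : M₁ → M₂` intertwining multiplication by every `H^∞` function. -/
def UnitaryEquivalent {n : ℕ} (M₁ M₂ : Set (Lp2 n)) : Prop :=
  ∃ U : Lp2 n → Lp2 n,
    (∀ f ∈ M₁, U f ∈ M₂) ∧
    (∀ g ∈ M₂, ∃ f ∈ M₁, U f = g) ∧
    (∀ f g : Lp2 n, f ∈ M₁ → g ∈ M₁ → U (f + g) = U f + U g) ∧
    (∀ (c : ℂ) (f : Lp2 n), f ∈ M₁ → U (c • f) = c • U f) ∧
    (∀ f ∈ M₁, ‖U f‖ = ‖f‖) ∧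
    (∀ φ : Torus n → ℂ, IsHinf φ → ∀ f ∈ M₁, ∀ g ∈ M₁, ∀ g' : Lp2 n,
      ((g : Torus n → ℂ) =ᵐ[(volume : Measure (Torus n))]
        fun x => φ x * (f : Torus n → ℂ) x) →
      ((g' : Torus n → ℂ) =ᵐ[(volume : Measure (Torus n))]
        fun x => φ x * ((U f : Lp2 n) : Torus n → ℂ) x) →
      U g = g')


/-!
Expand in the Fourier basis of `L²(Tⁿ⁺¹)`, the distinguished variable being the last one.
Multiplication by a bounded function `ψ` of the other variables acts on Fourier coefficients by a
convolution that does not change the last index, so it preserves the absence of negative powers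
of the last variable. As `f₀ ∈ M₁` and `g₀ ∈ M₂`, both `h f₀` and `h̄ g₀` lie in `H²`; dividing
by the generalized inner functions `f₀`, `g₀`, whose inverses are bounded, shows that neither `h`
nor `h̄` has negative powers of the last variable. So the spectrum of `h` lies in the hyperplane
`α (last n) = 0`, and `h` lies in the closed span of the monomials in the first `n` variables,
which is the image of the isometry `u ↦ u ∘ Fin.init`.
-/

instance : IsProbabilityMeasure (volume : Measure (AddCircle (1:ℝ))) := by
  rw [AddCircle.volume_eq_smul_haarAddCircle, ENNReal.ofReal_one, one_smul]; infer_instance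

lemma charFunT_add {n : ℕ} (α β : Fin n → ℤ) (x : Torus n) :
    charFunT (α + β) x = charFunT α x * charFunT β x := by
  simp only [charFunT, Pi.add_apply, fourier_add, Finset.prod_mul_distrib]

lemma charFunT_neg {n : ℕ} (α : Fin n → ℤ) (x : Torus n) :
    charFunT (-α) x = conj (charFunT α x) := by
  simp only [charFunT, Pi.neg_apply, fourier_neg, map_prod]

lemma charFunT_zero {n : ℕ} : charFunT (0 : Fin n → ℤ) = 1 := by
  ext x; simp [charFunT]

lemma charFunT_snoc {n : ℕ} (γ : Fin (n+1) → ℤ) (y : Torus n) (t : AddCircle (1:ℝ)) :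
    charFunT γ (Fin.snoc y t) = fourier (γ (Fin.last n)) t * charFunT (Fin.init γ) y := by
  simp only [charFunT, Fin.prod_univ_castSucc, Fin.snoc_castSucc, Fin.snoc_last, Fin.init]
  ring

lemma memLp_top_charFunT {n : ℕ} (α : Fin n → ℤ) : MemLp (charFunT α) ⊤ :=
  memLp_top_of_bound (charFun_continuous α).aestronglyMeasurable 1
    (.of_forall fun x => (charFun_norm α x).le)

theorem HilbertBasis.exists_of_measure_eq {α ι : Type*} [MeasurableSpace α] {μ ν : Measure α}
    (hμν : μ = ν) (b : HilbertBasis ι ℂ (Lp ℂ 2 μ)) {e : ι → α → ℂ}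
    (hb : ∀ i, (b i : α → ℂ) =ᵐ[μ] e i) :
    ∃ b' : HilbertBasis ι ℂ (Lp ℂ 2 ν), ∀ i, (b' i : α → ℂ) =ᵐ[ν] e i := by
  subst hμν; exact ⟨b, hb⟩

lemma volume_torus_eq_pi_haarAddCircle (n : ℕ) :
    (volume : Measure (Torus n)) = Measure.pi fun _ => AddCircle.haarAddCircle := by
  rw [volume_pi, AddCircle.volume_eq_smul_haarAddCircle]; simp

/-- `UnitAddTorus.mFourierBasis` is a basis of `L²` for the product of `haarAddCircle`, which
equals `volume` on `Torus n` only propositionally. -/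
theorem exists_hilbertBasis_charLp (n : ℕ) :
    ∃ b : HilbertBasis (Fin n → ℤ) ℂ (Lp2 n), ⇑b = charLp := by
  obtain ⟨b, hb⟩ := HilbertBasis.exists_of_measure_eq (volume_torus_eq_pi_haarAddCircle n).symm
    (UnitAddTorus.mFourierBasis (d := Fin n)) (e := charFunT) fun α => by
      rw [UnitAddTorus.coe_mFourierBasis]; exact UnitAddTorus.coeFn_mFourierLp 2 α
  refine ⟨b, funext fun α => Lp.ext ?_⟩
  filter_upwards [hb α, (charFun_memℒp α).coeFn_toLp] with x h1 h2
  rw [h1, charLp, h2]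

def fourierBasisT (n : ℕ) : HilbertBasis (Fin n → ℤ) ℂ (Lp2 n) :=
  (exists_hilbertBasis_charLp n).choose

@[simp]
lemma coe_fourierBasisT (n : ℕ) : ⇑(fourierBasisT n) = charLp :=
  (exists_hilbertBasis_charLp n).choose_spec

lemma fourierBasisT_repr {n : ℕ} (u : Lp2 n) (α : Fin n → ℤ) :
    (fourierBasisT n).repr u α = coeff u α := by
  rw [HilbertBasis.repr_apply_apply, coe_fourierBasisT, coeff]

lemma coeff_charLp {n : ℕ} (α β : Fin n → ℤ) : coeff (charLp β) α = if α = β then 1 else 0 := by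
  simpa [coeff] using orthonormal_iff_ite.mp (fourierBasisT n).orthonormal α β

lemma mem_of_coeff_ne_zero {n : ℕ} {K : Submodule ℂ (Lp2 n)} (hK : IsClosed (K : Set (Lp2 n)))
    {u : Lp2 n} (hu : ∀ α, coeff u α ≠ 0 → charLp α ∈ K) : u ∈ K := by
  rw [← ((fourierBasisT n).hasSum_repr u).tsum_eq]
  refine tsum_mem hK fun α => ?_
  rw [fourierBasisT_repr, coe_fourierBasisT]
  by_cases h : coeff u α = 0
  · rw [h, zero_smul]; exact K.zero_mem
  · exact K.smul_mem _ (hu α h)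

def fourierCoeffT {n : ℕ} (φ : Torus n → ℂ) (α : Fin n → ℤ) : ℂ :=
  ∫ x, conj (charFunT α x) * φ x

lemma inner_toLp_left {n : ℕ} {φ : Torus n → ℂ} (hφ : MemLp φ 2) (u : Lp2 n) :
    inner ℂ (hφ.toLp φ) u = ∫ x, conj (φ x) * u x := by
  rw [L2.inner_def]
  refine integral_congr_ae ?_
  filter_upwards [hφ.coeFn_toLp] with x hx
  rw [hx, RCLike.inner_apply, mul_comm]

lemma coeff_eq_integral {n : ℕ} (u : Lp2 n) (α : Fin n → ℤ) :
    coeff u α = ∫ x, conj (charFunT α x) * u x :=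
  inner_toLp_left (charFun_memℒp α) u

lemma coeff_toLp {n : ℕ} {φ : Torus n → ℂ} (hφ : MemLp φ 2) (α : Fin n → ℤ) :
    coeff (hφ.toLp φ) α = fourierCoeffT φ α := by
  rw [coeff_eq_integral, fourierCoeffT]
  refine integral_congr_ae ?_
  filter_upwards [hφ.coeFn_toLp] with x hx
  rw [hx]

lemma fourierCoeffT_charFunT_mul {n : ℕ} (φ : Torus n → ℂ) (α δ : Fin n → ℤ) :
    fourierCoeffT (charFunT δ * φ) α = fourierCoeffT φ (α - δ) := by
  refine integral_congr_ae (.of_forall fun x => ?_)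
  simp only [Pi.mul_apply, sub_eq_add_neg, charFunT_add, charFunT_neg, map_mul, Complex.conj_conj]
  ring

/-- Parseval's identity for `⟪χ_α φ̄, u⟫`. -/
theorem hasSum_coeff_mul {n : ℕ} {φ : Torus n → ℂ} (hφ : MemLp φ ⊤) {u w : Lp2 n}
    (hw : w =ᵐ[volume] fun x => φ x * u x) (α : Fin n → ℤ) :
    HasSum (fun β => fourierCoeffT φ (α - β) * coeff u β) (coeff w α) := by
  have hm : MemLp (fun x => charFunT α x * conj (φ x)) 2 :=
    (hφ.star.mul (memLp_top_charFunT α)).mono_exponent le_top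
  have hcoeff : coeff w α = inner ℂ (hm.toLp _) u := by
    rw [inner_toLp_left, coeff_eq_integral]
    refine integral_congr_ae ?_
    filter_upwards [hw] with x hx
    rw [hx, map_mul, Complex.conj_conj]; ring
  rw [hcoeff]
  refine ((fourierBasisT n).hasSum_inner_mul_inner (hm.toLp _) u).congr_fun fun β => ?_
  rw [coe_fourierBasisT, ← coeff, inner_toLp_left, fourierCoeffT]
  congr 1
  refine integral_congr_ae ?_
  filter_upwards [(charFun_memℒp β).coeFn_toLp] with x hx
  rw [charLp, hx, sub_eq_add_neg, charFunT_add, charFunT_neg, map_mul, map_mul, Complex.conj_conj,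
    Complex.conj_conj]
  ring

lemma coeff_mul_eq_zero {n : ℕ} {φ : Torus n → ℂ} (hφ : MemLp φ ⊤) {u w : Lp2 n}
    (hw : w =ᵐ[volume] fun x => φ x * u x) {α : Fin n → ℤ}
    (hα : ∀ β, coeff u β ≠ 0 → fourierCoeffT φ (α - β) = 0) : coeff w α = 0 := by
  refine (hasSum_coeff_mul hφ hw α).unique ?_
  convert hasSum_zero with β
  by_cases hβ : coeff u β = 0
  · rw [hβ, mul_zero]
  · rw [hα β hβ, zero_mul]

lemma integral_fourier (k : ℤ) :
    ∫ t : AddCircle (1:ℝ), fourier k t = if k = 0 then 1 else 0 := by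
  have := orthonormal_iff_ite.mp (orthonormal_fourier (T := 1)) 0 k
  rw [ContinuousMap.inner_toLp] at this
  simpa [AddCircle.volume_eq_smul_haarAddCircle, eq_comm] using this

lemma measurePreserving_init (n : ℕ) :
    MeasurePreserving (Fin.init : Torus (n+1) → Torus n) := by
  have hinit : (Fin.init : Torus (n+1) → Torus n) =
      Prod.snd ∘ MeasurableEquiv.piFinSuccAbove (fun _ => AddCircle (1:ℝ)) (Fin.last n) := by
    funext x; simp [MeasurableEquiv.piFinSuccAbove_apply]
  rw [hinit]
  exact measurePreserving_snd.comp
    (volume_preserving_piFinSuccAbove (fun _ : Fin (n+1) => AddCircle (1:ℝ)) (Fin.last n))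

lemma integral_torus_succ {n : ℕ} (F : Torus (n+1) → ℂ) :
    ∫ x, F x = ∫ p : AddCircle (1:ℝ) × Torus n, F (Fin.snoc p.2 p.1) := by
  rw [← (volume_preserving_piFinSuccAbove (fun _ : Fin (n+1) => AddCircle (1:ℝ))
    (Fin.last n)).symm.integral_comp' F]
  simp [MeasurableEquiv.piFinSuccAbove_symm_apply, Fin.snocEquiv]

lemma fourierCoeffT_liftLast {n : ℕ} (ψ : Torus n → ℂ) (γ : Fin (n+1) → ℤ) :
    fourierCoeffT (liftLast ψ) γ =
      if γ (Fin.last n) = 0 then fourierCoeffT ψ (Fin.init γ) else 0 := by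
  have hsplit : ∀ p : AddCircle (1:ℝ) × Torus n,
      conj (charFunT γ (Fin.snoc p.2 p.1)) * liftLast ψ (Fin.snoc p.2 p.1) =
        fourier (-γ (Fin.last n)) p.1 * (conj (charFunT (Fin.init γ) p.2) * ψ p.2) := by
    intro p
    rw [charFunT_snoc, liftLast, Fin.init_snoc, map_mul, fourier_neg]
    ring
  rw [fourierCoeffT, integral_torus_succ]
  simp_rw [hsplit]
  rw [show (volume : Measure (AddCircle (1:ℝ) × Torus n)) = volume.prod volume from rfl,
    integral_prod_mul (f := fun t => (fourier (-γ (Fin.last n)) t : ℂ))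
      (g := fun y => conj (charFunT (Fin.init γ) y) * ψ y), integral_fourier, fourierCoeffT]
  simp only [neg_eq_zero]
  split_ifs <;> simp

lemma MeasureTheory.MemLp.liftLast {n : ℕ} {p : ENNReal} {ψ : Torus n → ℂ} (hψ : MemLp ψ p) :
    MemLp (liftLast ψ) p :=
  hψ.comp_measurePreserving (measurePreserving_init n)

lemma ae_liftLast {n : ℕ} {P : ℂ → Prop} {ψ : Torus n → ℂ} (h : ∀ᵐ y, P (ψ y)) :
    ∀ᵐ x, P (liftLast ψ x) :=
  (measurePreserving_init n).quasiMeasurePreserving.ae h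

lemma IsGenInner.ae_ne_zero {n : ℕ} {φ : Torus n → ℂ} (hφ : IsGenInner φ) : ∀ᵐ x, φ x ≠ 0 := by
  obtain ⟨c, hc, hφc⟩ := hφ.2
  filter_upwards [hφc] with x hx
  exact norm_pos_iff.mp (hc.trans_le hx)

lemma IsGenInner.memLp_inv {n : ℕ} {φ : Torus n → ℂ} (hφ : IsGenInner φ) : MemLp φ⁻¹ ⊤ := by
  obtain ⟨c, hc, hφc⟩ := hφ.2
  refine memLp_top_of_bound hφ.1.memLinf.aestronglyMeasurable.aemeasurable.inv.aestronglyMeasurable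
    c⁻¹ ?_
  filter_upwards [hφc] with x hx
  rw [Pi.inv_apply, norm_inv]
  exact inv_anti₀ hc hx

lemma isClosed_H2 (n : ℕ) : IsClosed (H2 n : Set (Lp2 n)) := by
  show IsClosed {f | ∀ α : Fin n → ℤ, (∃ i, α i < 0) → coeff f α = 0}
  simp only [Set.ofPred_forall]
  exact isClosed_iInter fun α => isClosed_iInter fun _ =>
    isClosed_eq (continuous_const.inner continuous_id) continuous_const

lemma charLp_zero_mem_H2resLast (n : ℕ) : charLp 0 ∈ H2resLast n := by
  intro α hα
  rw [coeff_charLp, if_neg]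
  rintro rfl
  simp at hα

lemma liftLast_mem_seqM {n : ℕ} {u : ℕ → Torus n → ℂ} (hu : MemLp (liftLast (u 0)) 2 volume) :
    hu.toLp _ ∈ seqM u := by
  refine Submodule.le_topologicalClosure _ (Submodule.subset_span (Set.mem_iUnion.mpr
    ⟨0, charLp 0, charLp_zero_mem_H2resLast n, ?_⟩))
  filter_upwards [hu.coeFn_toLp, (charFun_memℒp 0).coeFn_toLp] with x h1 h2
  rw [h1, charLp, h2]
  simp [charFunT_zero]

lemma seqPiece_subset_H2 {n : ℕ} {f : ℕ → Torus n → ℂ} {l : ℕ} (hf : IsHinf (f l)) :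
    seqPiece f l ⊆ H2 (n+1) := by
  rintro v ⟨F, hF, hv⟩ α ⟨i, hi⟩
  refine coeff_mul_eq_zero ((hf.memLinf.liftLast).mul (memLp_top_charFunT _)) hv fun β hβ => ?_
  have hβ_nonneg : ∀ j, 0 ≤ β j := by
    by_contra hneg
    push Not at hneg
    exact hβ (hF β (Or.inl hneg))
  have hβ_last : β (Fin.last n) = 0 := by
    by_contra hne
    exact hβ (hF β (Or.inr hne))
  rw [fourierCoeffT_charFunT_mul, fourierCoeffT_liftLast]
  split_ifs with hlast
  · simp only [Pi.sub_apply, hβ_last, Pi.single_eq_same] at hlast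
    obtain ⟨j, rfl⟩ : ∃ j : Fin n, j.castSucc = i :=
      Fin.exists_castSucc_eq.mpr fun h => by subst h; omega
    refine hf.analytic _ ⟨j, ?_⟩
    simp only [Fin.init, Pi.sub_apply, Pi.single_eq_of_ne (Fin.castSucc_lt_last j).ne]
    linarith [hβ_nonneg j.castSucc]
  · rfl

lemma seqM_le_H2 {n : ℕ} {f : ℕ → Torus n → ℂ} (hf : ∀ l, IsHinf (f l)) : seqM f ≤ H2 (n+1) :=
  Submodule.topologicalClosure_minimal _
    (Submodule.span_le.mpr (Set.iUnion_subset fun _ => seqPiece_subset_H2 (hf _))) (isClosed_H2 _)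

lemma coeff_liftLast_mul_eq_zero {n : ℕ} {ψ : Torus n → ℂ} (hψ : MemLp ψ ⊤)
    {u w : Lp2 (n+1)} (hw : w =ᵐ[volume] fun x => liftLast ψ x * u x)
    (hu : ∀ β : Fin (n+1) → ℤ, β (Fin.last n) < 0 → coeff u β = 0)
    {α : Fin (n+1) → ℤ} (hα : α (Fin.last n) < 0) : coeff w α = 0 := by
  refine coeff_mul_eq_zero hψ.liftLast hw fun β hβ => ?_
  rw [fourierCoeffT_liftLast, if_neg]
  intro hlast
  simp only [Pi.sub_apply] at hlast
  exact hβ (hu β (by omega))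

lemma fourierCoeffT_eq_zero_of_mul_liftLast_mem_H2 {n : ℕ} {φ : Torus n → ℂ}
    (hφ : IsGenInner φ) {k : Torus (n+1) → ℂ} (hk : MemLp k 2) {v : Lp2 (n+1)}
    (hv : v ∈ H2 (n+1)) (hkv : v =ᵐ[volume] fun x => k x * liftLast φ x)
    {α : Fin (n+1) → ℤ} (hα : α (Fin.last n) < 0) : fourierCoeffT k α = 0 := by
  rw [← coeff_toLp hk]
  refine coeff_liftLast_mul_eq_zero hφ.memLp_inv ?_ (fun β hβ => hv β ⟨_, hβ⟩) hα
  filter_upwards [hk.coeFn_toLp, hkv, ae_liftLast (P := (· ≠ 0)) hφ.ae_ne_zero] with x hkx hvx hφx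
  simp only [liftLast, Pi.inv_apply] at hvx hφx ⊢
  rw [hkx, hvx]
  field_simp

lemma fourierCoeffT_conj {n : ℕ} (k : Torus n → ℂ) (α : Fin n → ℤ) :
    fourierCoeffT (fun x => conj (k x)) (-α) = conj (fourierCoeffT k α) := by
  rw [fourierCoeffT, fourierCoeffT, ← integral_conj]
  simp only [charFunT_neg, map_mul, Complex.conj_conj]

lemma charLp_eq_comp_init {n : ℕ} {α : Fin (n+1) → ℤ} (hα : α (Fin.last n) = 0) :
    charLp α = Lp.compMeasurePreserving Fin.init (measurePreserving_init n) (charLp (Fin.init α)) := by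
  refine Lp.ext ?_
  filter_upwards [(charFun_memℒp α).coeFn_toLp,
    Lp.coeFn_compMeasurePreserving (charLp (Fin.init α)) (measurePreserving_init n),
    (measurePreserving_init n).quasiMeasurePreserving.ae (charFun_memℒp (Fin.init α)).coeFn_toLp]
    with x h1 h2 h3
  rw [charLp, h1, h2, Function.comp_apply, charLp, h3, ← Fin.snoc_init_self x, charFunT_snoc, hα,
    fourier_zero, Fin.init_snoc, one_mul]

/-- The monomials with `α (last n) = 0` lie in the range of the isometry `u ↦ u ∘ Fin.init`,
which is closed, hence so does every function spectrally supported on them. -/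
theorem exists_eq_liftLast_of_fourierCoeffT_eq_zero {n : ℕ} {k : Torus (n+1) → ℂ}
    (hk : MemLp k 2)
    (hcoeff : ∀ α : Fin (n+1) → ℤ, α (Fin.last n) ≠ 0 → fourierCoeffT k α = 0) :
    ∃ k₀ : Torus n → ℂ, k =ᵐ[volume] liftLast k₀ := by
  let L : Lp2 n →ₗᵢ[ℂ] Lp2 (n+1) := Lp.compMeasurePreservingₗᵢ ℂ Fin.init (measurePreserving_init n)
  have hK : IsClosed (LinearMap.range L.toLinearMap : Set (Lp2 (n+1))) :=
    L.isometry.isClosedEmbedding.isClosed_range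
  obtain ⟨k₀, hk₀⟩ := mem_of_coeff_ne_zero hK (u := hk.toLp k) fun α hα =>
    ⟨charLp (Fin.init α), (charLp_eq_comp_init <| by_contra fun h => hα <| by
      rw [coeff_toLp, hcoeff α h]).symm⟩
  refine ⟨k₀, hk.coeFn_toLp.symm.trans ?_⟩
  rw [← hk₀]
  exact Lp.coeFn_compMeasurePreserving _ _

lemma ae_eq_conj_mul_of_ae_eq_mul {α : Type*} [MeasurableSpace α] {μ : Measure α}
    {h a b : α → ℂ} (huni : ∀ᵐ x ∂μ, ‖h x‖ = 1) (hab : a =ᵐ[μ] fun x => h x * b x) :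
    b =ᵐ[μ] fun x => conj (h x) * a x := by
  filter_upwards [huni, hab] with x hx hax
  rw [hax, ← mul_assoc, ← Complex.normSq_eq_conj_mul_self, Complex.normSq_eq_norm_sq, hx]
  simp

theorem stmt_16_general {n : ℕ} (f g : ℕ → Torus n → ℂ)
    (hf : SeqCond f) (hg : SeqCond g) (h : Torus (n+1) → ℂ)
    (hmeas : AEStronglyMeasurable h (volume : Measure (Torus (n+1))))
    (huni : ∀ᵐ x ∂(volume : Measure (Torus (n+1))), ‖h x‖ = 1)
    (heq : (seqM g : Set (Lp2 (n+1))) = mulSet h (seqM f : Set (Lp2 (n+1)))) :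
    ∃ h₀ : Torus n → ℂ, h =ᵐ[(volume : Measure (Torus (n+1)))] liftLast h₀ := by
  have hh : MemLp h ⊤ := memLp_top_of_bound hmeas 1 (huni.mono fun x hx => hx.le)
  have hF₀ : MemLp (liftLast (f 0)) 2 volume := (hf.1 0).1.memLinf.liftLast.mono_exponent le_top
  have hG₀ : MemLp (liftLast (g 0)) 2 volume := (hg.1 0).1.memLinf.liftLast.mono_exponent le_top
  have hneg : ∀ α : Fin (n+1) → ℤ, α (Fin.last n) < 0 → fourierCoeffT h α = 0 := by
    have hV : MemLp (h * liftLast (f 0)) 2 volume := hF₀.mul hh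
    have hVg : hV.toLp _ ∈ seqM g := by
      rw [← SetLike.mem_coe, heq]
      refine ⟨_, liftLast_mem_seqM hF₀, ?_⟩
      filter_upwards [hV.coeFn_toLp, hF₀.coeFn_toLp] with x h1 h2
      rw [h1, h2, Pi.mul_apply]
    exact fun α hα => fourierCoeffT_eq_zero_of_mul_liftLast_mem_H2 (hf.1 0)
      (hh.mono_exponent le_top) (seqM_le_H2 (fun l => (hg.1 l).1) hVg) hV.coeFn_toLp hα
  have hpos : ∀ α : Fin (n+1) → ℤ, 0 < α (Fin.last n) → fourierCoeffT h α = 0 := by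
    obtain ⟨W, hW, hWeq⟩ : hG₀.toLp _ ∈ mulSet h (seqM f : Set (Lp2 (n+1))) :=
      heq ▸ liftLast_mem_seqM hG₀
    intro α hα
    rw [← Complex.conj_conj (fourierCoeffT h α), ← fourierCoeffT_conj,
      fourierCoeffT_eq_zero_of_mul_liftLast_mem_H2 (k := fun x => conj (h x)) (α := -α) (hg.1 0)
        (hh.star.mono_exponent le_top) (seqM_le_H2 (fun l => (hf.1 l).1) hW) ?_ (by simpa using hα),
      map_zero]
    filter_upwards [ae_eq_conj_mul_of_ae_eq_mul huni hWeq, hG₀.coeFn_toLp] with x h1 h2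
    rw [h1, h2]
  exact exists_eq_liftLast_of_fourierCoeffT_eq_zero (hh.mono_exponent le_top) fun α hα =>
    hα.lt_or_gt.elim (hneg α) (hpos α)

/-- if `M₁, M₂` are sequence-based invariant subspaces and `h` is a unimodular
function on `Tⁿ` with `M₂ = h M₁`, then `h` is independent of the variable `z_n`. -/
theorem stmt_16 {n : ℕ} (hn : 0 < n) (f g : ℕ → Torus n → ℂ)
    (hf : SeqCond f) (hg : SeqCond g) (h : Torus (n+1) → ℂ)
    (hmeas : AEStronglyMeasurable h (volume : Measure (Torus (n+1))))
    (huni : ∀ᵐ x ∂(volume : Measure (Torus (n+1))), ‖h x‖ = 1)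
    (heq : (seqM g : Set (Lp2 (n+1))) = mulSet h (seqM f : Set (Lp2 (n+1)))) :
    ∃ h₀ : Torus n → ℂ, h =ᵐ[(volume : Measure (Torus (n+1)))] liftLast h₀ :=
  stmt_16_general f g hf hg h hmeas huni heq

end
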